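/- arXiv:1810.07755 — 2 statements merged into one kernel-verified Lean document; each statement's English description precedes it below -/
import Mathlib

section
/- Let T be a flow on a set X, let P : X → ι be a map into a finite index type, let R > 1 and 0 < ε ≤ 1/5, and let x, y, z ∈ X. If I_R(x) and I_R(y) are (ε,P)-matchable and I_R(y) and I_R(z) are (ε,P)-matchable, then I_R(x) and I_R(z) are (5ε,P)-matchable. -/
/-!
Compose the two matchings: keep the times `t ∈ A` with `ψ t ∈ B` and use `φ ∘ ψ`. Slopes
multiply, and `(1 ± ε)²` lies between `1 - 5ε` and `1 + 5ε`. Since `ψ` expands lengths by a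
factor at least `1 - ε`, the discarded times `A \ ψ⁻¹ B` have measure at most
`|[0,R] \ B| / (1 - ε) < εR / (1 - ε)`. The discarded part of `φ '' B` is `φ '' (B \ ψ '' A)`,
of measure at most `(1 + ε) |[0,R] \ ψ '' A| < (1 + ε) εR`; here `ψ '' A` is Borel by the
Lusin–Souslin theorem, `ψ` being continuous and injective on `A`.
-/

open MeasureTheory Set

/-- An `(ε,P)`-matching from the orbit segment `I_R(x)` onto `I_R(y)`:
a measurable set `A ⊆ [0,R]` of measure `> (1-ε)R` together with a map
`ψ : A → [0,R]` which is bi-Lipschitz with constants `1-ε`, `1+ε`, whose image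
has measure `> (1-ε)R`, and which matches the `P`-labels along the orbits. -/
def IsMatching {X : Type*} {ι : Type*} (T : ℝ → X → X) (P : X → ι)
    (R ε : ℝ) (x y : X) (A : Set ℝ) (ψ : ℝ → ℝ) : Prop :=
  MeasurableSet A ∧ A ⊆ Set.Icc 0 R ∧
  volume A > ENNReal.ofReal ((1 - ε) * R) ∧
  (∀ t ∈ A, ψ t ∈ Set.Icc 0 R) ∧
  (∀ s ∈ A, ∀ t ∈ A, s ≤ t →
    (1 - ε) * (t - s) ≤ ψ t - ψ s ∧ ψ t - ψ s ≤ (1 + ε) * (t - s)) ∧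
  volume (ψ '' A) > ENNReal.ofReal ((1 - ε) * R) ∧
  (∀ t ∈ A, P (T t x) = P (T (ψ t) y))

/-- `I_R(x)` and `I_R(y)` are `(ε,P)`-matchable. -/
def Matchable {X : Type*} {ι : Type*} (T : ℝ → X → X) (P : X → ι)
    (R ε : ℝ) (x y : X) : Prop :=
  ∃ (A : Set ℝ) (ψ : ℝ → ℝ), IsMatching T P R ε x y A ψ

theorem ContinuousOn.measurableSet_inter_preimage {α β : Type*} [TopologicalSpace α]
    [MeasurableSpace α] [OpensMeasurableSpace α] [TopologicalSpace β] [MeasurableSpace β]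
    [BorelSpace β] {f : α → β} {s : Set α} {t : Set β} (hf : ContinuousOn f s)
    (hs : MeasurableSet s) (ht : MeasurableSet t) : MeasurableSet (s ∩ f ⁻¹' t) := by
  have := hs.subtype_image ((continuousOn_iff_continuous_domRestrict.1 hf).measurable ht)
  rwa [domRestrict_eq, preimage_comp, Subtype.image_preimage_coe] at this

def SlopeBoundedOn (a b : ℝ) (f : ℝ → ℝ) (S : Set ℝ) : Prop :=
  ∀ s ∈ S, ∀ t ∈ S, s ≤ t → a * (t - s) ≤ f t - f s ∧ f t - f s ≤ b * (t - s)

namespace SlopeBoundedOn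

variable {a b : ℝ} {f : ℝ → ℝ} {S : Set ℝ}

theorem mono (h : SlopeBoundedOn a b f S) {S' : Set ℝ} (hS' : S' ⊆ S) :
    SlopeBoundedOn a b f S' :=
  fun s hs t ht hst => h s (hS' hs) t (hS' ht) hst

theorem mono_const (h : SlopeBoundedOn a b f S) {a' b' : ℝ} (ha : a' ≤ a) (hb : b ≤ b') :
    SlopeBoundedOn a' b' f S := by
  intro s hs t ht hst
  obtain ⟨h₁, h₂⟩ := h s hs t ht hst
  have hts : 0 ≤ t - s := sub_nonneg.2 hst
  exact ⟨(mul_le_mul_of_nonneg_right ha hts).trans h₁,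
    h₂.trans (mul_le_mul_of_nonneg_right hb hts)⟩

theorem comp {a' b' : ℝ} {g : ℝ → ℝ} {S' : Set ℝ} (hg : SlopeBoundedOn a' b' g S')
    (hf : SlopeBoundedOn a b f S) (hfS : MapsTo f S S') (ha : 0 ≤ a) (ha' : 0 ≤ a')
    (hb' : 0 ≤ b') : SlopeBoundedOn (a' * a) (b' * b) (g ∘ f) S := by
  intro s hs t ht hst
  obtain ⟨hf₁, hf₂⟩ := hf s hs t ht hst
  have hfst : f s ≤ f t := sub_nonneg.1 <| (mul_nonneg ha (sub_nonneg.2 hst)).trans hf₁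
  obtain ⟨hg₁, hg₂⟩ := hg (f s) (hfS hs) (f t) (hfS ht) hfst
  constructor
  · calc a' * a * (t - s) ≤ a' * (f t - f s) := by
          rw [mul_assoc]; exact mul_le_mul_of_nonneg_left hf₁ ha'
      _ ≤ _ := hg₁
  · calc (g ∘ f) t - (g ∘ f) s ≤ b' * (f t - f s) := hg₂
      _ ≤ b' * b * (t - s) := by rw [mul_assoc]; exact mul_le_mul_of_nonneg_left hf₂ hb'

theorem abs_sub (h : SlopeBoundedOn a b f S) (ha : 0 ≤ a) {s t : ℝ} (hs : s ∈ S) (ht : t ∈ S) :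
    a * |t - s| ≤ |f t - f s| ∧ |f t - f s| ≤ b * |t - s| := by
  wlog hst : s ≤ t generalizing s t
  · simpa only [abs_sub_comm] using this ht hs (le_of_not_ge hst)
  obtain ⟨h₁, h₂⟩ := h s hs t ht hst
  have hf : 0 ≤ f t - f s := (mul_nonneg ha (sub_nonneg.2 hst)).trans h₁
  rw [abs_of_nonneg (sub_nonneg.2 hst), abs_of_nonneg hf]
  exact ⟨h₁, h₂⟩

theorem lipschitzOnWith (h : SlopeBoundedOn a b f S) (ha : 0 ≤ a) :
    LipschitzOnWith (Real.toNNReal b) f S := by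
  refine LipschitzOnWith.of_dist_le' fun s hs t ht => ?_
  simpa only [Real.dist_eq, abs_sub_comm] using (h.abs_sub ha ht hs).2

theorem antilipschitzWith_domRestrict (h : SlopeBoundedOn a b f S) (ha : 0 < a) :
    AntilipschitzWith (Real.toNNReal a⁻¹) (S.domRestrict f) := by
  refine AntilipschitzWith.of_le_mul_dist fun s t => ?_
  rw [Real.coe_toNNReal _ (inv_nonneg.2 ha.le), Subtype.dist_eq, Real.dist_eq, Real.dist_eq,
    le_inv_mul_iff₀ ha, abs_sub_comm, abs_sub_comm (S.domRestrict f s)]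
  exact (h.abs_sub ha.le s.2 t.2).1

theorem injOn (h : SlopeBoundedOn a b f S) (ha : 0 < a) : InjOn f S :=
  injOn_iff_injective.2 (h.antilipschitzWith_domRestrict ha).injective

theorem volume_image_le (h : SlopeBoundedOn a b f S) (ha : 0 ≤ a) :
    volume (f '' S) ≤ ENNReal.ofReal b * volume S := by
  simpa [hausdorffMeasure_real, ENNReal.ofReal] using
    (h.lipschitzOnWith ha).hausdorffMeasure_image_le zero_le_one

theorem volume_le (h : SlopeBoundedOn a b f S) (ha : 0 < a) :
    volume S ≤ ENNReal.ofReal a⁻¹ * volume (f '' S) := by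
  have := (h.antilipschitzWith_domRestrict ha).le_hausdorffMeasure_image zero_le_one univ
  rwa [image_univ, range_domRestrict,
    ← isometry_subtype_coe.hausdorffMeasure_image (Or.inl zero_le_one), image_univ,
    Subtype.range_coe, hausdorffMeasure_real, ENNReal.rpow_one] at this

theorem measurableSet_image (h : SlopeBoundedOn a b f S) (ha : 0 < a) (hS : MeasurableSet S) :
    MeasurableSet (f '' S) :=
  hS.image_of_continuousOn_injOn (h.lipschitzOnWith ha.le).continuousOn (h.injOn ha)

end SlopeBoundedOn

theorem volume_Icc_diff_le {R ε : ℝ} {S : Set ℝ} (hS : MeasurableSet S) (hSR : S ⊆ Icc 0 R)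
    (hvol : ENNReal.ofReal ((1 - ε) * R) ≤ volume S) :
    volume (Icc 0 R \ S) ≤ ENNReal.ofReal (ε * R) := by
  rw [measure_sdiff_le_iff_le_add hS.nullMeasurableSet hSR (measure_ne_top_of_subset hSR
    measure_Icc_lt_top.ne)]
  calc volume (Icc 0 R) = ENNReal.ofReal ((1 - ε) * R + ε * R) := by
        rw [Real.volume_Icc]; ring_nf
    _ ≤ ENNReal.ofReal ((1 - ε) * R) + ENNReal.ofReal (ε * R) := ENNReal.ofReal_add_le
    _ ≤ volume S + ENNReal.ofReal (ε * R) := by gcongr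

theorem ENNReal.ofReal_lt_of_ofReal_lt_add {a b c : ℝ} {u v : ENNReal} (hb : 0 ≤ b)
    (hc : 0 ≤ c) (habc : c + b ≤ a) (h : ENNReal.ofReal a < u + v) (hv : v ≤ ENNReal.ofReal b) :
    ENNReal.ofReal c < u := by
  by_contra! hu
  refine (h.trans_le ?_).false
  calc u + v ≤ ENNReal.ofReal c + ENNReal.ofReal b := add_le_add hu hv
    _ = ENNReal.ofReal (c + b) := (ENNReal.ofReal_add hc hb).symm
    _ ≤ ENNReal.ofReal a := ENNReal.ofReal_le_ofReal habc

namespace IsMatching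

variable {X ι : Type*} {T : ℝ → X → X} {P : X → ι} {R ε : ℝ} {x y z : X} {A B : Set ℝ}
  {ψ φ : ℝ → ℝ}

theorem length_pos (h : IsMatching T P R ε x y A ψ) : 0 < R := by
  obtain ⟨-, hAR, hAvol, -⟩ := h
  by_contra! hR
  have hA : volume A = 0 := measure_mono_null hAR (by simp [Real.volume_Icc, hR])
  simp [hA] at hAvol

theorem ofReal_lt_volume_inter_preimage (hψ : IsMatching T P R ε x y A ψ)
    (hφ : IsMatching T P R ε y z B φ) (hε : 0 ≤ ε) (hε' : ε ≤ 1 / 5) :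
    ENNReal.ofReal ((1 - 5 * ε) * R) < volume (A ∩ ψ ⁻¹' B) := by
  have hR := hψ.length_pos
  obtain ⟨-, -, hAvol, hψR, hψ : SlopeBoundedOn _ _ ψ A, -⟩ := hψ
  obtain ⟨hB, hBR, hBvol, -⟩ := hφ
  have h1ε : 0 < 1 - ε := by linarith
  have hmiss : volume (A \ ψ ⁻¹' B) ≤ ENNReal.ofReal ((1 - ε)⁻¹ * (ε * R)) :=
    calc volume (A \ ψ ⁻¹' B)
        ≤ ENNReal.ofReal (1 - ε)⁻¹ * volume (ψ '' (A \ ψ ⁻¹' B)) :=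
          (hψ.mono sdiff_subset).volume_le h1ε
      _ ≤ ENNReal.ofReal (1 - ε)⁻¹ * volume (Icc 0 R \ B) := by
          gcongr
          rintro _ ⟨t, ht, rfl⟩
          exact ⟨hψR t ht.1, ht.2⟩
      _ ≤ ENNReal.ofReal (1 - ε)⁻¹ * ENNReal.ofReal (ε * R) := by
          gcongr
          exact volume_Icc_diff_le hB hBR hBvol.le
      _ = ENNReal.ofReal ((1 - ε)⁻¹ * (ε * R)) :=
          (ENNReal.ofReal_mul (inv_nonneg.2 h1ε.le)).symm
  have hinv : (1 - ε)⁻¹ ≤ 4 := by rw [inv_le_comm₀ h1ε (by norm_num)]; linarith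
  refine ENNReal.ofReal_lt_of_ofReal_lt_add (by positivity) (by nlinarith) ?_
    (hAvol.trans_le (measure_le_inter_add_sdiff _ _ _)) hmiss
  nlinarith [mul_le_mul_of_nonneg_right hinv (by positivity : 0 ≤ ε * R)]

theorem ofReal_lt_volume_image_comp (hψ : IsMatching T P R ε x y A ψ)
    (hφ : IsMatching T P R ε y z B φ) (hε : 0 ≤ ε) (hε' : ε ≤ 1 / 5) :
    ENNReal.ofReal ((1 - 5 * ε) * R) < volume ((φ ∘ ψ) '' (A ∩ ψ ⁻¹' B)) := by
  have hR := hψ.length_pos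
  obtain ⟨hA, -, -, hψR, hψ : SlopeBoundedOn _ _ ψ A, hψvol, -⟩ := hψ
  obtain ⟨-, hBR, -, -, hφ : SlopeBoundedOn _ _ φ B, hφvol, -⟩ := hφ
  have h1ε : 0 < 1 - ε := by linarith
  have hmiss : volume (φ '' (B \ ψ '' A)) ≤ ENNReal.ofReal ((1 + ε) * (ε * R)) :=
    calc volume (φ '' (B \ ψ '' A)) ≤ ENNReal.ofReal (1 + ε) * volume (B \ ψ '' A) :=
          (hφ.mono sdiff_subset).volume_image_le h1ε.le
      _ ≤ ENNReal.ofReal (1 + ε) * volume (Icc 0 R \ ψ '' A) := by gcongr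
      _ ≤ ENNReal.ofReal (1 + ε) * ENNReal.ofReal (ε * R) := by
          gcongr
          exact volume_Icc_diff_le (hψ.measurableSet_image h1ε hA) (image_subset_iff.2 hψR)
            hψvol.le
      _ = ENNReal.ofReal ((1 + ε) * (ε * R)) := (ENNReal.ofReal_mul (by linarith)).symm
  have hsplit : volume (φ '' B)
      ≤ volume ((φ ∘ ψ) '' (A ∩ ψ ⁻¹' B)) + volume (φ '' (B \ ψ '' A)) :=
    calc volume (φ '' B) = volume (φ '' (B ∩ ψ '' A) ∪ φ '' (B \ ψ '' A)) := by
          rw [← image_union, inter_union_sdiff]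
      _ ≤ volume (φ '' (B ∩ ψ '' A)) + volume (φ '' (B \ ψ '' A)) := measure_union_le _ _
      _ = volume ((φ ∘ ψ) '' (A ∩ ψ ⁻¹' B)) + volume (φ '' (B \ ψ '' A)) := by
          rw [image_comp, image_inter_preimage, inter_comm]
  refine ENNReal.ofReal_lt_of_ofReal_lt_add (by positivity) (by nlinarith)
    ?_ (hφvol.trans_le hsplit) hmiss
  nlinarith [mul_nonneg (mul_nonneg hε hR.le) (by linarith : 0 ≤ 3 - ε)]

theorem comp (hψ : IsMatching T P R ε x y A ψ) (hφ : IsMatching T P R ε y z B φ)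
    (hε : 0 ≤ ε) (hε' : ε ≤ 1 / 5) : IsMatching T P R (5 * ε) x z (A ∩ ψ ⁻¹' B) (φ ∘ ψ) := by
  have hC := hψ.ofReal_lt_volume_inter_preimage hφ hε hε'
  have hφψC := hψ.ofReal_lt_volume_image_comp hφ hε hε'
  obtain ⟨hA, hAR, -, -, hψ : SlopeBoundedOn _ _ ψ A, -, hψP⟩ := hψ
  obtain ⟨hB, -, -, hφR, hφ : SlopeBoundedOn _ _ φ B, -, hφP⟩ := hφ
  have h1ε : 0 < 1 - ε := by linarith
  refine ⟨?_, inter_subset_left.trans hAR, hC, fun t ht => hφR _ ht.2, ?_, hφψC,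
    fun t ht => (hψP t ht.1).trans (hφP _ ht.2)⟩
  · exact (hψ.lipschitzOnWith h1ε.le).continuousOn.measurableSet_inter_preimage hA hB
  · refine (hφ.comp (hψ.mono inter_subset_left) (fun t ht => ht.2) h1ε.le h1ε.le
      (by linarith)).mono_const ?_ ?_ <;> nlinarith

end IsMatching

theorem matchable_trans_general {X ι : Type*}
    (T : ℝ → X → X)
    (P : X → ι) (R ε : ℝ) (hε : 0 < ε) (hε' : ε ≤ 1 / 5)
    (x y z : X)
    (hxy : Matchable T P R ε x y) (hyz : Matchable T P R ε y z) :
    Matchable T P R (5 * ε) x z := by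
  obtain ⟨A, ψ, hψ⟩ := hxy
  obtain ⟨B, φ, hφ⟩ := hyz
  exact ⟨_, _, hψ.comp hφ hε.le hε'⟩

/-- If `I_R(x)` and `I_R(y)` are `(ε,P)`-matchable and `I_R(y)` and `I_R(z)`
are `(ε,P)`-matchable, then `I_R(x)` and `I_R(z)` are `(5ε,P)`-matchable. -/
theorem matchable_trans {X ι : Type*} [Finite ι]
    (T : ℝ → X → X) (hT0 : ∀ x, T 0 x = x)
    (hTadd : ∀ s t x, T (s + t) x = T s (T t x))
    (P : X → ι) (R ε : ℝ) (hR : 1 < R) (hε : 0 < ε) (hε' : ε ≤ 1 / 5)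
    (x y z : X)
    (hxy : Matchable T P R ε x y) (hyz : Matchable T P R ε y z) :
    Matchable T P R (5 * ε) x z :=
  matchable_trans_general T P R ε hε hε' x y z hxy hyz
end

section
/- Let (X, 𝓑, μ) be a probability space and T a flow on X such that the map (t, x) ↦ T_t x is jointly measurable, each T_t preserves μ, and T is ergodic in the sense that every measurable set S with T_t^{−1}(S) = S for all t ∈ ℝ satisfies μ(S) ∈ {0, 1}. Let ε > 0 and let V ⊆ X be measurable with μ(V) < ε/2. Then there exist a measurable set D ⊆ X with μ(D) > 1 − ε² and a number N > 0 such that for every y ∈ D and every R ≥ N, the Lebesgue measure of {t ∈ [0, R] : T_t y ∈ V} is at most εR/2. -/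
/-!
The upper density `limsup |{t ∈ [0,n] : T_t y ∈ V}| / n` of the time an orbit spends in `V`
is invariant under the flow. Hopf's maximal ergodic inequality for the time-one map, applied
to `y ↦ |{t ∈ [0,1] : T_t y ∈ V}|` (whose integral is `μ V` by Fubini), shows that the set
where the density exceeds a given `c > μ V` has measure less than `1`, so by ergodicity it is
null. Hence almost every orbit has density at most `μ V < ε/2`, and continuity of `μ` from above
(Egorov's argument) makes the bound uniform for all large times off a set of measure `< ε²`.
-/

open MeasureTheory Set
open Filter Topology
open scoped ENNReal

section MaximalErgodic

variable {α : Type*} {φ : α → α} {f : α → ℝ}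

noncomputable def birkhoffMax (φ : α → α) (f : α → ℝ) : ℕ → α → ℝ
  | 0 => 0
  | N + 1 => birkhoffMax φ f N ⊔ birkhoffSum φ f (N + 1)

theorem birkhoffMax_succ (N : ℕ) (x : α) :
    birkhoffMax φ f (N + 1) x = max (birkhoffMax φ f N x) (birkhoffSum φ f (N + 1) x) :=
  rfl

theorem birkhoffMax_nonneg (N : ℕ) (x : α) : 0 ≤ birkhoffMax φ f N x := by
  induction N with
  | zero => exact le_rfl
  | succ N ih => exact ih.trans le_sup_left

theorem monotone_birkhoffMax (x : α) : Monotone fun N => birkhoffMax φ f N x :=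
  monotone_nat_of_le_succ fun _ => le_sup_left

theorem birkhoffSum_le_birkhoffMax {n N : ℕ} (h : n ≤ N) (x : α) :
    birkhoffSum φ f n x ≤ birkhoffMax φ f N x := by
  refine le_trans ?_ (monotone_birkhoffMax x h)
  cases n with
  | zero => exact (birkhoffSum_zero φ f x).trans_le (birkhoffMax_nonneg 0 x)
  | succ n => exact le_sup_right

theorem exists_birkhoffSum_pos_of_birkhoffMax_pos {N : ℕ} {x : α}
    (h : 0 < birkhoffMax φ f N x) : ∃ n, 0 < birkhoffSum φ f n x := by
  induction N with
  | zero => exact absurd h (lt_irrefl 0)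
  | succ N ih => exact (lt_sup_iff.1 h).elim ih fun h => ⟨N + 1, h⟩

theorem birkhoffMax_le_add_birkhoffMax_apply {N : ℕ} {x : α} (h : 0 < birkhoffMax φ f N x) :
    birkhoffMax φ f N x ≤ f x + birkhoffMax φ f N (φ x) := by
  induction N with
  | zero => exact absurd h (lt_irrefl 0)
  | succ N ih =>
    rcases le_total (birkhoffMax φ f N x) (birkhoffSum φ f (N + 1) x) with hle | hle
    · rw [birkhoffMax_succ, max_eq_right hle, birkhoffSum_succ']
      gcongr
      exact birkhoffSum_le_birkhoffMax N.le_succ (φ x)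
    · rw [birkhoffMax_succ, max_eq_left hle] at h ⊢
      linarith [ih h, monotone_birkhoffMax (φ := φ) (f := f) (φ x) N.le_succ]

variable [MeasurableSpace α] {μ : Measure α}

theorem measurable_birkhoffMax (hφ : Measurable φ) (hf : Measurable f) (N : ℕ) :
    Measurable (birkhoffMax φ f N) := by
  induction N with
  | zero => exact measurable_const
  | succ N ih =>
    exact ih.sup <| Finset.measurable_sum _ fun k _ => hf.comp (hφ.iterate k)

theorem integrable_birkhoffMax (hφ : MeasurePreserving φ μ μ) (hf : Integrable f μ) (N : ℕ) :
    Integrable (birkhoffMax φ f N) μ := by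
  induction N with
  | zero => exact integrable_zero α ℝ μ
  | succ N ih =>
    exact ih.sup <| integrable_finsetSum _ fun k _ =>
      (hφ.iterate k).integrable_comp_of_integrable hf

/-- Hopf's argument: on `{M > 0}` one has `f ≥ M - M ∘ φ`, and `M - M ∘ φ` integrates to
a nonnegative number there because `M` vanishes off this set and `φ` preserves `μ`. -/
theorem setIntegral_birkhoffMax_pos_nonneg (hφ : MeasurePreserving φ μ μ) (hfm : Measurable f)
    (hf : Integrable f μ) (N : ℕ) :
    0 ≤ ∫ x in {x | 0 < birkhoffMax φ f N x}, f x ∂μ := by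
  set M := birkhoffMax φ f N
  set E := {x | 0 < M x}
  have hMm : Measurable M := measurable_birkhoffMax hφ.measurable hfm N
  have hM : Integrable M μ := integrable_birkhoffMax hφ hf N
  have hMφ : Integrable (M ∘ φ) μ := hφ.integrable_comp_of_integrable hM
  have hE : MeasurableSet E := measurableSet_lt measurable_const hMm
  have hME : ∫ x in E, M x ∂μ = ∫ x, M x ∂μ := by
    refine setIntegral_eq_integral_of_forall_compl_eq_zero fun x hx => ?_
    exact le_antisymm (not_lt.1 hx) (birkhoffMax_nonneg N x)
  have hMφE : ∫ x in E, M (φ x) ∂μ ≤ ∫ x, M x ∂μ := by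
    calc ∫ x in E, M (φ x) ∂μ ≤ ∫ x, M (φ x) ∂μ :=
          setIntegral_le_integral hMφ (.of_forall fun x => birkhoffMax_nonneg N (φ x))
      _ = ∫ x, M x ∂μ := by
          rw [← integral_map hφ.aemeasurable hMm.aestronglyMeasurable, hφ.map_eq]
  calc 0 ≤ ∫ x in E, M x ∂μ - ∫ x in E, M (φ x) ∂μ := by linarith
    _ = ∫ x in E, (M x - M (φ x)) ∂μ := (integral_sub hM.restrict hMφ.restrict).symm
    _ ≤ ∫ x in E, f x ∂μ := by
        refine setIntegral_mono_on (hM.sub hMφ).restrict hf.restrict hE fun x hx => ?_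
        linarith [birkhoffMax_le_add_birkhoffMax_apply hx]

theorem maximal_ergodic_inequality (hφ : MeasurePreserving φ μ μ) (hfm : Measurable f)
    (hf : Integrable f μ) :
    0 ≤ ∫ x in {x | ∃ n, 0 < birkhoffSum φ f n x}, f x ∂μ := by
  have hE : {x | ∃ n, 0 < birkhoffSum φ f n x} = ⋃ N, {x | 0 < birkhoffMax φ f N x} := by
    ext x
    rw [mem_iUnion]
    exact ⟨fun ⟨n, hn⟩ => ⟨n, hn.trans_le (birkhoffSum_le_birkhoffMax le_rfl x)⟩,
      fun ⟨_, hN⟩ => exists_birkhoffSum_pos_of_birkhoffMax_pos hN⟩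
  rw [hE]
  refine ge_of_tendsto (tendsto_setIntegral_of_monotone (fun N => ?_) (fun M N hMN x hx => ?_)
    hf.integrableOn) (.of_forall (setIntegral_birkhoffMax_pos_nonneg hφ hfm hf))
  · exact measurableSet_lt measurable_const (measurable_birkhoffMax hφ.measurable hfm N)
  · exact hx.trans_le (monotone_birkhoffMax x hMN)

theorem mul_measureReal_le_integral_of_birkhoffSum_gt [IsFiniteMeasure μ]
    (hφ : MeasurePreserving φ μ μ) (hfm : Measurable f) (hf : Integrable f μ) (hf0 : 0 ≤ f)
    (c : ℝ) : c * μ.real {x | ∃ n : ℕ, c * n < birkhoffSum φ f n x} ≤ ∫ x, f x ∂μ := by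
  set E := {x | ∃ n : ℕ, c * n < birkhoffSum φ f n x}
  have hsum : ∀ n x, birkhoffSum φ (f - fun _ => c) n x = birkhoffSum φ f n x - c * n := by
    intro n x
    simp [birkhoffSum, mul_comm]
  have hE : E = {x | ∃ n, 0 < birkhoffSum φ (f - fun _ => c) n x} := by
    simp only [E, hsum, sub_pos]
  have key :=
    maximal_ergodic_inequality hφ (hfm.sub measurable_const) (hf.sub (integrable_const c))
  rw [← hE, Pi.sub_def, integral_sub hf.restrict (integrable_const c).restrict,
    setIntegral_const, smul_eq_mul] at key
  linarith [setIntegral_le_integral (s := E) hf (.of_forall hf0)]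

end MaximalErgodic

section LimsupEgorov

variable {α : Type*} [MeasurableSpace α] {u : ℕ → α → ℝ≥0∞}

theorem measurableSet_exists_ge_lt (hu : ∀ n, Measurable (u n)) (c : ℝ≥0∞) (m : ℕ) :
    MeasurableSet {x | ∃ n ≥ m, c < u n x} := by
  simp only [ofPred_exists]
  exact .iUnion fun n => (MeasurableSet.const _).inter (measurableSet_lt measurable_const (hu n))

theorem tendsto_measure_exists_ge_lt_of_ae_limsup_lt {μ : Measure α} [IsFiniteMeasure μ]
    (hu : ∀ n, Measurable (u n)) {c : ℝ≥0∞} (h : ∀ᵐ x ∂μ, limsup (fun n => u n x) atTop < c) :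
    Tendsto (fun m => μ {x | ∃ n ≥ m, c < u n x}) atTop (𝓝 0) := by
  have hanti : Antitone fun m => {x | ∃ n ≥ m, c < u n x} :=
    fun _ _ hkm _ ⟨n, hn, hlt⟩ => ⟨n, hkm.trans hn, hlt⟩
  have hnull : μ (⋂ m, {x | ∃ n ≥ m, c < u n x}) = 0 := by
    refine measure_eq_zero_iff_ae_notMem.2 (h.mono fun x hx hmem => hx.not_ge ?_)
    refine le_limsup_of_frequently_le' (frequently_atTop.2 fun m => ?_)
    obtain ⟨n, hn, hlt⟩ := mem_iInter.1 hmem m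
    exact ⟨n, hn, hlt.le⟩
  rw [← hnull]
  exact tendsto_measure_iInter_atTop
    (fun m => (measurableSet_exists_ge_lt hu c m).nullMeasurableSet) hanti ⟨0, measure_ne_top μ _⟩

end LimsupEgorov

section VisitTime

variable {X : Type*} {T : ℝ → X → X} {V : Set X}

theorem iterate_flow_apply (hT0 : ∀ x, T 0 x = x) (hTadd : ∀ s t x, T (s + t) x = T s (T t x))
    (s : ℝ) (k : ℕ) (x : X) : (T s)^[k] x = T (k * s) x := by
  induction k with
  | zero => simp [hT0]
  | succ k ih => rw [Function.iterate_succ_apply', ih, ← hTadd]; push_cast; ring_nf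

variable (T V) in
noncomputable def visitTime (y : X) (a b : ℝ) : ℝ≥0∞ :=
  volume {t : ℝ | t ∈ Icc a b ∧ T t y ∈ V}

theorem measurable_visitTime [MeasurableSpace X] (hTjm : Measurable fun p : ℝ × X => T p.1 p.2)
    (hV : MeasurableSet V) (a b : ℝ) : Measurable fun y => visitTime T V y a b :=
  measurable_measure_prodMk_right ((measurable_fst measurableSet_Icc).inter (hTjm hV))

theorem visitTime_mono (y : X) {a a' b b' : ℝ} (ha : a' ≤ a) (hb : b ≤ b') :
    visitTime T V y a b ≤ visitTime T V y a' b' :=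
  measure_mono fun _ ht => ⟨Icc_subset_Icc ha hb ht.1, ht.2⟩

theorem visitTime_le (y : X) (a b : ℝ) : visitTime T V y a b ≤ ENNReal.ofReal (b - a) :=
  (measure_mono fun _ ht => ht.1).trans_eq Real.volume_Icc

theorem visitTime_ne_top (y : X) (a b : ℝ) : visitTime T V y a b ≠ ⊤ :=
  ne_top_of_le_ne_top ENNReal.ofReal_ne_top (visitTime_le y a b)

theorem visitTime_le_add (y : X) (a b c : ℝ) :
    visitTime T V y a c ≤ visitTime T V y a b + visitTime T V y b c := by
  refine (measure_mono ?_).trans (measure_union_le _ _)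
  rintro t ⟨⟨hat, htc⟩, htV⟩
  rcases le_total t b with htb | htb
  · exact Or.inl ⟨⟨hat, htb⟩, htV⟩
  · exact Or.inr ⟨⟨htb, htc⟩, htV⟩

theorem visitTime_flow (hTadd : ∀ s t x, T (s + t) x = T s (T t x)) (s a b : ℝ) (y : X) :
    visitTime T V (T s y) a b = visitTime T V y (a + s) (b + s) := by
  have : {t : ℝ | t ∈ Icc a b ∧ T t (T s y) ∈ V} =
      (· + s) ⁻¹' {t | t ∈ Icc (a + s) (b + s) ∧ T t y ∈ V} := by
    ext t
    simp [← hTadd]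
  rw [visitTime, this, measure_preimage_add_right, visitTime]

theorem visitTime_flow_le (hTadd : ∀ s t x, T (s + t) x = T s (T t x)) (s : ℝ) (y : X) (b : ℝ) :
    visitTime T V (T s y) 0 b ≤ visitTime T V y 0 b + ENNReal.ofReal (2 * |s|) := by
  calc visitTime T V (T s y) 0 b = visitTime T V y (0 + s) (b + s) :=
        visitTime_flow hTadd s 0 b y
    _ ≤ visitTime T V y (-|s|) (b + |s|) :=
        visitTime_mono y (by linarith [neg_abs_le s]) (by linarith [le_abs_self s])
    _ ≤ visitTime T V y (-|s|) 0 + (visitTime T V y 0 b + visitTime T V y b (b + |s|)) := by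
        grw [visitTime_le_add y (-|s|) 0, visitTime_le_add y 0 b]
    _ ≤ ENNReal.ofReal |s| + (visitTime T V y 0 b + ENNReal.ofReal |s|) := by
        gcongr
        · simpa using visitTime_le (T := T) (V := V) y (-|s|) 0
        · simpa using visitTime_le (T := T) (V := V) y b (b + |s|)
    _ = visitTime T V y 0 b + ENNReal.ofReal (2 * |s|) := by
        rw [two_mul, ENNReal.ofReal_add (abs_nonneg s) (abs_nonneg s)]
        ring

theorem visitTime_le_birkhoffSum (hT0 : ∀ x, T 0 x = x)
    (hTadd : ∀ s t x, T (s + t) x = T s (T t x)) (y : X) (n : ℕ) :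
    visitTime T V y 0 n ≤ birkhoffSum (T 1) (fun x => visitTime T V x 0 1) n y := by
  induction n with
  | zero => simpa using visitTime_le (T := T) (V := V) y 0 0
  | succ n ih =>
    rw [birkhoffSum_succ, iterate_flow_apply hT0 hTadd, visitTime_flow hTadd]
    push_cast
    rw [mul_one, zero_add, add_comm 1]
    grw [visitTime_le_add y 0 n, ih]

theorem visitTime_le_of_forall_div_le {y : X} {m : ℕ} {r R : ℝ} (hr : 0 ≤ r)
    (h : ∀ n ≥ m, visitTime T V y 0 n / n ≤ ENNReal.ofReal r) (hR : m ≤ R) :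
    visitTime T V y 0 R ≤ ENNReal.ofReal (r * (R + 1)) := by
  have hR0 : 0 ≤ R := (Nat.cast_nonneg m).trans hR
  have hm : m ≤ ⌈R⌉₊ := Nat.cast_le.1 (hR.trans (Nat.le_ceil R))
  calc visitTime T V y 0 R ≤ visitTime T V y 0 ⌈R⌉₊ := visitTime_mono y le_rfl (Nat.le_ceil R)
    _ ≤ ENNReal.ofReal r * ⌈R⌉₊ :=
        (ENNReal.div_le_iff_le_mul (.inr ENNReal.ofReal_ne_top)
          (.inl (ENNReal.natCast_ne_top _))).1 (h _ hm)
    _ ≤ ENNReal.ofReal (r * (R + 1)) := by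
        rw [ENNReal.ofReal_mul hr, ← ENNReal.ofReal_natCast]
        gcongr
        exact (Nat.ceil_lt_add_one hR0).le

end VisitTime

section Density

variable {X : Type*} {T : ℝ → X → X} {V : Set X}

variable (T V) in
noncomputable def upperVisitDensity (y : X) : ℝ≥0∞ :=
  limsup (fun n : ℕ => visitTime T V y 0 n / n) atTop

theorem measurable_upperVisitDensity [MeasurableSpace X]
    (hTjm : Measurable fun p : ℝ × X => T p.1 p.2) (hV : MeasurableSet V) :
    Measurable (upperVisitDensity T V) :=
  .limsup fun n => (measurable_visitTime hTjm hV 0 n).div_const _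

theorem upperVisitDensity_flow_le (hTadd : ∀ s t x, T (s + t) x = T s (T t x)) (s : ℝ) (y : X) :
    upperVisitDensity T V (T s y) ≤ upperVisitDensity T V y := by
  have hdiv : Tendsto (fun n : ℕ => ENNReal.ofReal (2 * |s|) / n) atTop (𝓝 0) := by
    simpa only [ENNReal.div_top] using
      ENNReal.Tendsto.const_div ENNReal.tendsto_nat_nhds_top (.inr ENNReal.ofReal_ne_top)
  calc upperVisitDensity T V (T s y)
      ≤ limsup (fun n : ℕ => visitTime T V y 0 n / n + ENNReal.ofReal (2 * |s|) / n) atTop := by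
        refine limsup_le_limsup (.of_forall fun n => ?_)
        simp only [← ENNReal.add_div]
        gcongr
        exact visitTime_flow_le hTadd s y n
    _ = upperVisitDensity T V y := ENNReal.limsup_add_of_right_tendsto_zero hdiv _

theorem upperVisitDensity_flow (hT0 : ∀ x, T 0 x = x)
    (hTadd : ∀ s t x, T (s + t) x = T s (T t x)) (s : ℝ) (y : X) :
    upperVisitDensity T V (T s y) = upperVisitDensity T V y := by
  refine le_antisymm (upperVisitDensity_flow_le hTadd s y) ?_
  simpa [← hTadd, hT0] using upperVisitDensity_flow_le (V := V) hTadd (-s) (T s y)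

theorem exists_lt_birkhoffSum_of_lt_upperVisitDensity (hT0 : ∀ x, T 0 x = x)
    (hTadd : ∀ s t x, T (s + t) x = T s (T t x)) {c : ℝ} (hc : 0 ≤ c) {y : X}
    (hy : ENNReal.ofReal c < upperVisitDensity T V y) :
    ∃ n : ℕ, c * n < birkhoffSum (T 1) (fun x => (visitTime T V x 0 1).toReal) n y := by
  obtain ⟨n, hn, hn1⟩ := ((frequently_lt_of_lt_limsup (by isBoundedDefault) hy).and_eventually
    (eventually_ge_atTop 1)).exists
  refine ⟨n, ?_⟩
  have hfin : ∀ k ∈ Finset.range n, visitTime T V ((T 1)^[k] y) 0 1 ≠ ⊤ :=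
    fun _ _ => visitTime_ne_top _ _ _
  have hlt : ENNReal.ofReal (c * n) < birkhoffSum (T 1) (fun x => visitTime T V x 0 1) n y := by
    rw [ENNReal.ofReal_mul hc, ENNReal.ofReal_natCast]
    refine lt_of_lt_of_le ?_ (visitTime_le_birkhoffSum hT0 hTadd y n)
    exact (ENNReal.lt_div_iff_mul_lt (.inl (by exact_mod_cast (zero_lt_one.trans_le hn1).ne'))
      (.inl (ENNReal.natCast_ne_top n))).1 hn
  rwa [birkhoffSum, ENNReal.ofReal_lt_iff_lt_toReal (by positivity) (ENNReal.sum_ne_top.2 hfin),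
    ENNReal.toReal_sum hfin] at hlt

end Density

section Ergodic

variable {X : Type*} [MeasurableSpace X] {μ : Measure X} {T : ℝ → X → X} {V : Set X}

theorem lintegral_visitTime_zero_one [SFinite μ] (hTjm : Measurable fun p : ℝ × X => T p.1 p.2)
    (hTpres : ∀ t, MeasurePreserving (T t) μ μ) (hV : MeasurableSet V) :
    ∫⁻ y, visitTime T V y 0 1 ∂μ = μ V := by
  set s : Set (ℝ × X) := {p | p.1 ∈ Icc 0 1 ∧ T p.1 p.2 ∈ V}
  have hs : MeasurableSet s := (measurable_fst measurableSet_Icc).inter (hTjm hV)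
  have hslice : ∀ t, μ (Prod.mk t ⁻¹' s) = (Icc 0 1).indicator (fun _ => μ V) t := by
    intro t
    by_cases ht : t ∈ Icc (0 : ℝ) 1
    · rw [indicator_of_mem ht, ← (hTpres t).measure_preimage hV.nullMeasurableSet]
      simp only [s, preimage_ofPred_eq, ht, true_and]
      rfl
    · simp only [s, preimage_ofPred_eq, ht, false_and, ofPred_false, measure_empty,
        indicator_of_notMem ht]
  calc ∫⁻ y, visitTime T V y 0 1 ∂μ = volume.prod μ s := (Measure.prod_apply_symm hs).symm
    _ = ∫⁻ t, (Icc (0 : ℝ) 1).indicator (fun _ => μ V) t := by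
        simp_rw [Measure.prod_apply hs, hslice]
    _ = μ V := by simp [lintegral_indicator_const measurableSet_Icc]

theorem measure_lt_upperVisitDensity_eq_zero [IsProbabilityMeasure μ] (hT0 : ∀ x, T 0 x = x)
    (hTadd : ∀ s t x, T (s + t) x = T s (T t x)) (hTjm : Measurable fun p : ℝ × X => T p.1 p.2)
    (hTpres : ∀ t, MeasurePreserving (T t) μ μ)
    (herg : ∀ S : Set X, MeasurableSet S → (∀ t, T t ⁻¹' S = S) → μ S = 0 ∨ μ S = 1)
    (hV : MeasurableSet V) {c : ℝ} (hc : μ V < ENNReal.ofReal c) :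
    μ {y | ENNReal.ofReal c < upperVisitDensity T V y} = 0 := by
  have hc0 : 0 < c := ENNReal.ofReal_pos.1 (pos_of_gt hc)
  set g : X → ℝ := fun x => (visitTime T V x 0 1).toReal
  have hgm : Measurable g := (measurable_visitTime hTjm hV 0 1).ennreal_toReal
  have hg : Integrable g μ := by
    refine .of_bound hgm.aestronglyMeasurable 1 (.of_forall fun x => ?_)
    rw [Real.norm_of_nonneg ENNReal.toReal_nonneg]
    exact ENNReal.toReal_le_of_le_ofReal zero_le_one (by simpa using visitTime_le x 0 1)
  have hgint : ∫ x, g x ∂μ = μ.real V := by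
    rw [integral_toReal (measurable_visitTime hTjm hV 0 1).aemeasurable
      (.of_forall fun x => (visitTime_ne_top x 0 1).lt_top),
      lintegral_visitTime_zero_one hTjm hTpres hV, measureReal_def]
  have hmax := (mul_measureReal_le_integral_of_birkhoffSum_gt (hTpres 1) hgm hg
    (fun _ => ENNReal.toReal_nonneg) c).trans_eq hgint
  refine (herg _ (measurableSet_lt measurable_const (measurable_upperVisitDensity hTjm hV))
    fun t => ?_).resolve_right fun hfull => ?_
  · ext y
    simp [upperVisitDensity_flow hT0 hTadd]
  · have hE : μ {x | ∃ n : ℕ, c * n < birkhoffSum (T 1) g n x} = 1 :=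
      le_antisymm prob_le_one <| hfull ▸ measure_mono fun y hy =>
        exists_lt_birkhoffSum_of_lt_upperVisitDensity hT0 hTadd hc0.le hy
    rw [measureReal_def, hE, ENNReal.toReal_one, mul_one] at hmax
    exact (ENNReal.toReal_lt_of_lt_ofReal hc).not_ge hmax

theorem ae_upperVisitDensity_le [IsProbabilityMeasure μ] (hT0 : ∀ x, T 0 x = x)
    (hTadd : ∀ s t x, T (s + t) x = T s (T t x)) (hTjm : Measurable fun p : ℝ × X => T p.1 p.2)
    (hTpres : ∀ t, MeasurePreserving (T t) μ μ)
    (herg : ∀ S : Set X, MeasurableSet S → (∀ t, T t ⁻¹' S = S) → μ S = 0 ∨ μ S = 1)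
    (hV : MeasurableSet V) : ∀ᵐ y ∂μ, upperVisitDensity T V y ≤ μ V := by
  have h : ∀ q : ℚ, ∀ᵐ y ∂μ, μ V < ENNReal.ofReal q →
      upperVisitDensity T V y ≤ ENNReal.ofReal q := by
    intro q
    by_cases hq : μ V < ENNReal.ofReal q
    · filter_upwards [measure_eq_zero_iff_ae_notMem.1
        (measure_lt_upperVisitDensity_eq_zero hT0 hTadd hTjm hTpres herg hV hq)] with y hy
      exact fun _ => not_lt.1 hy
    · exact .of_forall fun _ h => absurd h hq
  filter_upwards [ae_all_iff.2 h] with y hy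
  refine le_of_forall_gt fun b hb => ?_
  obtain ⟨q, -, hVq, hqb⟩ := ENNReal.lt_iff_exists_rat_btwn.1 hb
  exact (hy q hVq).trans_lt hqb

end Ergodic

/-- Uniform visit-time bound from the ergodic theorem: for an ergodic
measure-preserving flow `T` on a probability space and a measurable set `V`
with `μ(V) < ε/2`, there is a set `D` of measure `> 1 - ε²` and a time `N > 0`
such that for every `y ∈ D` and `R ≥ N`, the time spent in `V` along
`[0,R]` is at most `εR/2`. -/
theorem uniform_visit_time_bound {X : Type*} [MeasurableSpace X]
    (μ : Measure X) [IsProbabilityMeasure μ]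
    (T : ℝ → X → X)
    (hT0 : ∀ x, T 0 x = x)
    (hTadd : ∀ s t x, T (s + t) x = T s (T t x))
    (hTjm : Measurable (fun p : ℝ × X => T p.1 p.2))
    (hTpres : ∀ t : ℝ, MeasurePreserving (T t) μ μ)
    (herg : ∀ S : Set X, MeasurableSet S → (∀ t : ℝ, T t ⁻¹' S = S) →
      μ S = 0 ∨ μ S = 1)
    (ε : ℝ) (hε : 0 < ε)
    (V : Set X) (hV : MeasurableSet V) (hVsmall : μ V < ENNReal.ofReal (ε / 2)) :
    ∃ (D : Set X) (N : ℝ), MeasurableSet D ∧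
      ENNReal.ofReal (1 - ε ^ 2) < μ D ∧ 0 < N ∧
      ∀ y ∈ D, ∀ R : ℝ, N ≤ R →
        volume {t : ℝ | t ∈ Set.Icc 0 R ∧ T t y ∈ V} ≤
          ENNReal.ofReal (ε * R / 2) := by
  obtain ⟨r, hr0, hVr, hrε⟩ := ENNReal.lt_iff_exists_real_btwn.1 hVsmall
  rw [ENNReal.ofReal_lt_ofReal_iff (by positivity)] at hrε
  have hu : ∀ n : ℕ, Measurable fun y => visitTime T V y 0 n / n :=
    fun n => (measurable_visitTime hTjm hV 0 n).div_const _
  have hδ : 0 < 1 - ENNReal.ofReal (1 - ε ^ 2) :=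
    tsub_pos_of_lt (ENNReal.ofReal_lt_one.2 (sub_lt_self 1 (by positivity)))
  obtain ⟨m, hmδ, hm1⟩ := ((tendsto_measure_exists_ge_lt_of_ae_limsup_lt hu
    ((ae_upperVisitDensity_le hT0 hTadd hTjm hTpres herg hV).mono fun y hy => hy.trans_lt hVr)
    ).eventually_lt_const hδ |>.and (eventually_ge_atTop 1)).exists
  have hB := measurableSet_exists_ge_lt hu (ENNReal.ofReal r) m
  -- `R ≥ r / (ε / 2 - r)` is exactly `r * (R + 1) ≤ ε * R / 2`.
  refine ⟨_, max m (r / (ε / 2 - r)), hB.compl, ?_, ?_, fun y hy R hR => ?_⟩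
  · rw [prob_compl_eq_one_sub hB]
    exact lt_tsub_comm.1 hmδ
  · exact lt_max_of_lt_left (by exact_mod_cast hm1)
  · have hvisit := visitTime_le_of_forall_div_le hr0
      (fun n hn => not_lt.1 fun h => hy ⟨n, hn, h⟩) (le_of_max_le_left hR)
    refine hvisit.trans (ENNReal.ofReal_le_ofReal ?_)
    have := (div_le_iff₀ (sub_pos.2 hrε)).1 (le_of_max_le_right hR)
    nlinarith
end
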